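/- Soundness of the γ-decomposition for disjunctions of box formulae: for every CGM M, state s, coalition A, and state formulae p, q, M,s ⊨ ⟨⟨A⟩⟩((□p) ∨ (□q)) if and only if M,s ⊨ (p ∧ ⟨⟨A⟩⟩◯⟨⟨A⟩⟩□p) ∨ (q ∧ ⟨⟨A⟩⟩◯⟨⟨A⟩⟩□q) ∨ (p ∧ q ∧ ⟨⟨A⟩⟩◯⟨⟨A⟩⟩((□p) ∨ (□q))). -/

import Mathlib

/-- A concurrent game model. -/
structure CGM (Agent State : Type) where
  Act : Type
  avail : Agent → State → Set Act
  avail_ne : ∀ a s, (avail a s).Nonempty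
  out : State → (Agent → Act) → State

namespace CGM
variable {Agent State : Type} (M : CGM Agent State)

/-- A global move available at `s`. -/
def GlobalAvail (s : State) (σ : Agent → M.Act) : Prop := ∀ a, σ a ∈ M.avail a s

/-- A play: an infinite sequence of states following transitions. -/
def IsPlay (lam : ℕ → State) : Prop :=
  ∀ i, ∃ σ, M.GlobalAvail (lam i) σ ∧ M.out (lam i) σ = lam (i + 1)

/-- The history `λ₀ … λᵢ` of a play. -/
def hist (lam : ℕ → State) (i : ℕ) : List State := (List.range (i + 1)).map lam

/-- A perfect-recall strategy for coalition `A` prescribes available moves. -/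
def StratAvail (A : Set Agent) (F : List State → Agent → M.Act) : Prop :=
  ∀ (h : List State) (s : State), h.getLast? = some s → ∀ a ∈ A, F h a ∈ M.avail a s

/-- A play is compliant with the `A`-strategy `F`. -/
def Compliant (A : Set Agent) (F : List State → Agent → M.Act) (lam : ℕ → State) : Prop :=
  ∀ i, ∃ σ, M.GlobalAvail (lam i) σ ∧ (∀ a ∈ A, σ a = F (CGM.hist lam i) a) ∧
    M.out (lam i) σ = lam (i + 1)

/-- `M,s ⊨ ⟨⟨A⟩⟩Φ` : some perfect-recall `A`-strategy makes every compliant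
play from `s` satisfy the path property `Φ`. -/
def satCoal (A : Set Agent) (s : State) (Φ : (ℕ → State) → Prop) : Prop :=
  ∃ F, M.StratAvail A F ∧
    ∀ lam : ℕ → State, lam 0 = s → M.IsPlay lam → M.Compliant A F lam → Φ lam

end CGM

/-- ATL* formulae (state and path formulae together); `coal` is `⟨⟨A⟩⟩`,
`dcoal` is `[[A]]`, `untl` is the until operator. -/
inductive Form (Agent : Type) where
  | top : Form Agent
  | atom : ℕ → Form Agent
  | neg : Form Agent → Form Agent
  | and : Form Agent → Form Agent → Form Agent
  | or : Form Agent → Form Agent → Form Agent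
  | coal : Set Agent → Form Agent → Form Agent
  | dcoal : Set Agent → Form Agent → Form Agent
  | next : Form Agent → Form Agent
  | box : Form Agent → Form Agent
  | untl : Form Agent → Form Agent → Form Agent

namespace Form
variable {Agent State : Type}

mutual
/-- ATL⁺ state formulae. -/
def isState : Form Agent → Bool
  | .top => true
  | .atom _ => true
  | .neg φ => isState φ
  | .and φ ψ => isState φ && isState ψ
  | .or φ ψ => isState φ && isState ψ
  | .coal _ Φ => isPathPlus Φ
  | .dcoal _ Φ => isPathPlus Φ
  | _ => false

/-- ATL⁺ path formulae: boolean combinations of state formulae and of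
`◯φ`, `□φ`, `φ U ψ` with `φ, ψ` state formulae. -/
def isPathPlus : Form Agent → Bool
  | .top => true
  | .atom _ => true
  | .coal _A Φ => isPathPlus Φ
  | .dcoal _A Φ => isPathPlus Φ
  | .neg Φ => isPathPlus Φ
  | .and Φ Ψ => isPathPlus Φ && isPathPlus Ψ
  | .or Φ Ψ => isPathPlus Φ && isPathPlus Ψ
  | .next φ => isState φ
  | .box φ => isState φ
  | .untl φ ψ => isState φ && isState ψ
end

/-- Path satisfaction `M,λ ⊨ Φ` (state formulae are read at `λ 0`). -/
def psat (M : CGM Agent State) (V : ℕ → State → Prop) : Form Agent → (ℕ → State) → Prop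
  | .top, _ => True
  | .atom n, lam => V n (lam 0)
  | .neg φ, lam => ¬ psat M V φ lam
  | .and φ ψ, lam => psat M V φ lam ∧ psat M V ψ lam
  | .or φ ψ, lam => psat M V φ lam ∨ psat M V ψ lam
  | .coal A Φ, lam => M.satCoal A (lam 0) (fun lam' => psat M V Φ lam')
  | .dcoal A Φ, lam => M.satCoal Aᶜ (lam 0) (fun lam' => psat M V Φ lam')
  | .next φ, lam => psat M V φ (fun j => lam (j + 1))
  | .box φ, lam => ∀ i, psat M V φ (fun j => lam (i + j))
  | .untl φ ψ, lam => ∃ i, psat M V ψ (fun j => lam (i + j)) ∧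
      ∀ k < i, psat M V φ (fun j => lam (k + j))

/-- State satisfaction `M,s ⊨ φ` for state formulae. -/
def SSat (M : CGM Agent State) (V : ℕ → State → Prop) (φ : Form Agent) (s : State) : Prop :=
  psat M V φ (fun _ => s)

/-- Number of symbols of a formula. -/
def size : Form Agent → ℕ
  | .top => 1
  | .atom _ => 1
  | .neg φ => size φ + 1
  | .and φ ψ => size φ + size ψ + 1
  | .or φ ψ => size φ + size ψ + 1
  | .untl φ ψ => size φ + size ψ + 1
  | .coal _ Φ => size Φ + 1
  | .dcoal _ Φ => size Φ + 1
  | .next Φ => size Φ + 1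
  | .box Φ => size Φ + 1

def isTop : Form Agent → Bool
  | .top => true
  | _ => false

end Form

open Form

/-- The `⊗` operation on sets (lists) of pairs of formulae. -/
def otimes {Agent : Type} (l₁ l₂ : List (Form Agent × Form Agent)) :
    List (Form Agent × Form Agent) :=
  l₁.flatMap fun p => l₂.map fun q => (p.1.and q.1, p.2.and q.2)

/-- The `⊕` operation on sets (lists) of pairs of formulae. -/
def oplus {Agent : Type} (l₁ l₂ : List (Form Agent × Form Agent)) :
    List (Form Agent × Form Agent) :=
  (l₁.filter fun p => !p.2.isTop).flatMap fun p =>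
    (l₂.filter fun q => !q.2.isTop).map fun q => (p.1.and q.1, p.2.or q.2)

/-- The decomposition function `dec` on ATL⁺ path formulae. -/
def dec {Agent : Type} : Form Agent → List (Form Agent × Form Agent)
  | .next φ => [(.top, φ)]
  | .box φ => [(φ, .box φ)]
  | .untl φ ψ => [(φ, .untl φ ψ), (ψ, .top)]
  | .and Φ₁ Φ₂ => otimes (dec Φ₁) (dec Φ₂)
  | .or Φ₁ Φ₂ => dec Φ₁ ++ dec Φ₂ ++ oplus (dec Φ₁) (dec Φ₂)
  | φ => [(φ, .top)]

/-- The γ-component of a pair `(ψ,Ψ)` for `⟨⟨A⟩⟩`. -/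
def gcomp {Agent : Type} (A : Set Agent) (p : Form Agent × Form Agent) : Form Agent :=
  if p.2.isTop then p.1 else p.1.and (.coal A (.next (.coal A p.2)))

/-- The γ-component of a pair `(ψ,Ψ)` for `[[A]]`. -/
def gcompU {Agent : Type} (A : Set Agent) (p : Form Agent × Form Agent) : Form Agent :=
  if p.2.isTop then p.1 else p.1.and (.dcoal A (.next (.dcoal A p.2)))

/-- Conjunctive normal form: a list of clauses (lists of "literals"). -/
def cnf {Agent : Type} : Form Agent → List (List (Form Agent))
  | .and φ ψ => cnf φ ++ cnf ψ
  | .or φ ψ => (cnf φ).flatMap fun c => (cnf ψ).map fun d => c ++ d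
  | φ => [[φ]]

/-- Disjunction of a list of formulae. -/
def bigOr {Agent : Type} : List (Form Agent) → Form Agent
  | [] => .neg .top
  | a :: l => l.foldl .or a

/-- γ_d-components of `⟨⟨A⟩⟩Φ` : the conjuncts (clauses) of the CNF of the
disjunction of the γ-components. -/
def gammaD {Agent : Type} (A : Set Agent) (Φ : Form Agent) : List (Form Agent) :=
  (cnf (bigOr ((dec Φ).map (gcomp A)))).map bigOr

/-- γ_d-components of `[[A]]Φ`. -/
def gammaDU {Agent : Type} (A : Set Agent) (Φ : Form Agent) : List (Form Agent) :=
  (cnf (bigOr ((dec Φ).map (gcompU A)))).map bigOr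

/-- The component relation: successor, α, β and γ_d components. -/
inductive Component {Agent : Type} : Form Agent → Form Agent → Prop
  | andL (φ ψ : Form Agent) : Component (.and φ ψ) φ
  | andR (φ ψ : Form Agent) : Component (.and φ ψ) ψ
  | orL (φ ψ : Form Agent) : Component (.or φ ψ) φ
  | orR (φ ψ : Form Agent) : Component (.or φ ψ) ψ
  | succE (A : Set Agent) (φ : Form Agent) : Component (.coal A (.next φ)) φ
  | succU (A : Set Agent) (φ : Form Agent) : Component (.dcoal A (.next φ)) φ
  | gammaE (A : Set Agent) (Φ δ : Form Agent) :
      δ ∈ gammaD A Φ → Component (.coal A Φ) δ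
  | gammaU (A : Set Agent) (Φ δ : Form Agent) :
      δ ∈ gammaDU A Φ → Component (.dcoal A Φ) δ

/-- Membership in the closure `cl φ` : least set containing `⊤` and `φ`
closed under taking components. -/
inductive InCl {Agent : Type} (φ : Form Agent) : Form Agent → Prop
  | base : InCl φ φ
  | top : InCl φ .top
  | step {ψ χ : Form Agent} : InCl φ ψ → Component ψ χ → InCl φ χ

/-!
Since `p` and `q` are state formulae, `□p` holds on a play iff `p` holds at its first state and
`□p` holds on its tail, and every compliant play from `s` starts at `s`; so the left-hand side
splits according to which of `p`, `q` hold at `s` into strategic statements about the tails of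
plays. It remains to see that `⟨⟨A⟩⟩◯⟨⟨A⟩⟩Φ` and `⟨⟨A⟩⟩◯Φ` agree for every path property `Φ`:
a strategy for the latter, restricted to histories extending the first step, is one for the inner
`⟨⟨A⟩⟩Φ`; conversely, perfect recall lets the coalition play a strategy for `⟨⟨A⟩⟩◯⟨⟨A⟩⟩Φ` in
the first round and then switch to a winning strategy for `⟨⟨A⟩⟩Φ` chosen for the state reached.
-/

namespace CGM

variable {Agent State : Type} {M : CGM Agent State} {A : Set Agent}

theorem hist_succ (lam : ℕ → State) (i : ℕ) : hist lam (i + 1) = hist lam i ++ [lam (i + 1)] := by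
  simp [hist, List.range_succ]

theorem getLast?_hist (lam : ℕ → State) (i : ℕ) : (hist lam i).getLast? = some (lam i) := by
  cases i
  · rfl
  · simp [hist_succ]

theorem hist_succ_eq_cons (lam : ℕ → State) (i : ℕ) :
    hist lam (i + 1) = lam 0 :: hist (fun k => lam (k + 1)) i := by
  induction i with
  | zero => rfl
  | succ n ih => rw [hist_succ, ih, hist_succ]; rfl

theorem StratAvail.cons {F : List State → Agent → M.Act} (hF : M.StratAvail A F) (s : State) :
    M.StratAvail A (fun h => F (s :: h)) := by
  intro h t hlast a ha
  refine hF (s :: h) t ?_ a ha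
  cases h with
  | nil => simp at hlast
  | cons x h => rwa [List.getLast?_cons_cons]

theorem exists_compliant {F : List State → Agent → M.Act} (hF : M.StratAvail A F) (s : State) :
    ∃ lam, lam 0 = s ∧ M.IsPlay lam ∧ M.Compliant A F lam := by
  classical
  let move : List State → Agent → M.Act := fun h a =>
    if a ∈ A then F h a else (M.avail_ne a (h.getLastD s)).choose
  -- moves depend on the whole history, so the histories are built first
  let H : ℕ → List State := fun n =>
    Nat.rec [s] (fun _ h => h ++ [M.out (h.getLastD s) (move h)]) n
  let lam : ℕ → State := fun n => (H n).getLastD s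
  have hH : ∀ n, H n = hist lam n := by
    intro n
    induction n with
    | zero => rfl
    | succ n ih =>
      rw [hist_succ, ← ih]
      simp [H, lam]
  have hmove : ∀ n, M.GlobalAvail (lam n) (move (H n)) := by
    intro n a
    by_cases ha : a ∈ A
    · simpa [move, ha, hH] using hF _ _ (getLast?_hist lam n) a ha
    · simp only [move, if_neg ha]
      exact (M.avail_ne a _).choose_spec
  have hout : ∀ n, M.out (lam n) (move (H n)) = lam (n + 1) := by
    intro n
    simp [lam, H]
  refine ⟨lam, rfl, fun n => ⟨_, hmove n, hout n⟩, fun n => ⟨_, hmove n, ?_, hout n⟩⟩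
  intro a ha
  simp [move, ha, hH]

theorem not_satCoal_false (s : State) : ¬ M.satCoal A s (fun _ => False) := by
  rintro ⟨F, hF, hwin⟩
  obtain ⟨lam, h0, hplay, hcomp⟩ := exists_compliant hF s
  exact hwin lam h0 hplay hcomp

theorem satCoal_mono {s : State} {Φ Ψ : (ℕ → State) → Prop}
    (h : ∀ lam, lam 0 = s → Φ lam → Ψ lam) (hΦ : M.satCoal A s Φ) : M.satCoal A s Ψ := by
  obtain ⟨F, hF, hwin⟩ := hΦ
  exact ⟨F, hF, fun lam h0 hplay hcomp => h lam h0 (hwin lam h0 hplay hcomp)⟩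

theorem satCoal_congr {s : State} {Φ Ψ : (ℕ → State) → Prop}
    (h : ∀ lam, lam 0 = s → (Φ lam ↔ Ψ lam)) : M.satCoal A s Φ ↔ M.satCoal A s Ψ :=
  ⟨satCoal_mono fun lam h0 => (h lam h0).1, satCoal_mono fun lam h0 => (h lam h0).2⟩

def consPlay (s : State) (nu : ℕ → State) : ℕ → State
  | 0 => s
  | n + 1 => nu n

theorem consPlay_of_compliant {F : List State → Agent → M.Act} {s : State} {σ : Agent → M.Act}
    {nu : ℕ → State} (hσ : M.GlobalAvail s σ) (hσF : ∀ a ∈ A, σ a = F [s] a)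
    (hout : M.out s σ = nu 0) (hplay : M.IsPlay nu)
    (hcomp : M.Compliant A (fun h => F (s :: h)) nu) :
    M.IsPlay (consPlay s nu) ∧ M.Compliant A F (consPlay s nu) := by
  refine ⟨fun i => ?_, fun i => ?_⟩
  · cases i with
    | zero => exact ⟨σ, hσ, hout⟩
    | succ n => exact hplay n
  · cases i with
    | zero => exact ⟨σ, hσ, hσF, hout⟩
    | succ n => rw [hist_succ_eq_cons]; exact hcomp n

theorem satCoal_satCoal_of_satCoal_tail {s : State} {Φ : (ℕ → State) → Prop}
    (h : M.satCoal A s (fun lam => Φ (fun k => lam (k + 1)))) :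
    M.satCoal A s (fun lam => M.satCoal A (lam 1) Φ) := by
  obtain ⟨F, hF, hwin⟩ := h
  refine ⟨F, hF, fun lam h0 _ hcomp => ⟨_, hF.cons s, fun nu hnu0 hplay hnucomp => ?_⟩⟩
  obtain ⟨σ, hσ, hσF, hout⟩ := hcomp 0
  subst h0
  obtain ⟨hplay', hcomp'⟩ :=
    consPlay_of_compliant hσ hσF (hout.trans hnu0.symm) hplay hnucomp
  exact hwin (consPlay (lam 0) nu) rfl hplay' hcomp'

/-- Play `F` in the first round, then the strategy `G t` for the state `t` reached, fed the
histories from `t` on. -/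
def pasteStrat (F : List State → Agent → M.Act) (G : State → List State → Agent → M.Act) :
    List State → Agent → M.Act
  | _ :: t :: h => G t (t :: h)
  | h => F h

theorem StratAvail.pasteStrat {F : List State → Agent → M.Act}
    {G : State → List State → Agent → M.Act} (hF : M.StratAvail A F)
    (hG : ∀ t, M.StratAvail A (G t)) : M.StratAvail A (pasteStrat F G) := by
  intro h t hlast a ha
  match h with
  | [] => simp at hlast
  | [x] => exact hF [x] t hlast a ha
  | x :: y :: h => exact hG y (y :: h) t (by rwa [List.getLast?_cons_cons] at hlast) a ha

theorem Compliant.tail_of_pasteStrat {F : List State → Agent → M.Act}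
    {G : State → List State → Agent → M.Act} {lam : ℕ → State}
    (h : M.Compliant A (pasteStrat F G) lam) :
    M.Compliant A (G (lam 1)) (fun k => lam (k + 1)) := by
  intro i
  obtain ⟨σ, hσ, hσF, hout⟩ := h (i + 1)
  refine ⟨σ, hσ, fun a ha => ?_, hout⟩
  rw [hσF a ha, hist_succ_eq_cons]
  cases i with
  | zero => rfl
  | succ n => rw [hist_succ_eq_cons]; rfl

theorem satCoal_tail_of_satCoal_satCoal {s : State} {Φ : (ℕ → State) → Prop}
    (h : M.satCoal A s (fun lam => M.satCoal A (lam 1) Φ)) :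
    M.satCoal A s (fun lam => Φ (fun k => lam (k + 1))) := by
  obtain ⟨F, hF, hwin⟩ := h
  have hG : ∀ t, ∃ G, M.StratAvail A G ∧ (M.satCoal A t Φ →
      ∀ nu, nu 0 = t → M.IsPlay nu → M.Compliant A G nu → Φ nu) := by
    intro t
    by_cases ht : M.satCoal A t Φ
    · obtain ⟨G, hG, hGwin⟩ := ht
      exact ⟨G, hG, fun _ => hGwin⟩
    · exact ⟨_, hF.cons s, fun ht' => absurd ht' ht⟩
  choose G hG hGwin using hG
  refine ⟨pasteStrat F G, hF.pasteStrat hG, fun lam h0 hplay hcomp => ?_⟩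
  obtain ⟨σ, hσ, hσF, hout⟩ := hcomp 0
  subst h0
  -- a play compliant with `F` through `lam 1` witnesses that `Φ` can be enforced from `lam 1`
  obtain ⟨nu, hnu0, hnuplay, hnucomp⟩ := exists_compliant (hF.cons (lam 0)) (lam 1)
  obtain ⟨hplay', hcomp'⟩ :=
    consPlay_of_compliant (F := F) hσ hσF (hout.trans hnu0.symm) hnuplay hnucomp
  have hwin₁ : M.satCoal A (lam 1) Φ := hnu0 ▸ hwin (consPlay (lam 0) nu) rfl hplay' hcomp'
  exact hGwin (lam 1) hwin₁ _ rfl (fun i => hplay (i + 1)) hcomp.tail_of_pasteStrat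

theorem satCoal_satCoal_iff_satCoal_tail {s : State} {Φ : (ℕ → State) → Prop} :
    M.satCoal A s (fun lam => M.satCoal A (lam 1) Φ) ↔
      M.satCoal A s (fun lam => Φ (fun k => lam (k + 1))) :=
  ⟨satCoal_tail_of_satCoal_satCoal, satCoal_satCoal_of_satCoal_tail⟩

theorem satCoal_and_or_and {s : State} (a b : Prop) (Φ Ψ : (ℕ → State) → Prop) :
    M.satCoal A s (fun lam => a ∧ Φ lam ∨ b ∧ Ψ lam) ↔
      a ∧ M.satCoal A s Φ ∨ b ∧ M.satCoal A s Ψ ∨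
        a ∧ b ∧ M.satCoal A s (fun lam => Φ lam ∨ Ψ lam) := by
  by_cases ha : a <;> by_cases hb : b <;> simp only [ha, hb, true_and, false_and, or_false,
    false_or, and_false, not_satCoal_false]
  exact ⟨fun h => Or.inr (Or.inr h), fun h => h.elim (satCoal_mono fun _ _ => Or.inl)
    (Or.elim · (satCoal_mono fun _ _ => Or.inr) id)⟩

theorem satCoal_box_or_box {s : State} (P Q : State → Prop) :
    M.satCoal A s (fun lam => (∀ i, P (lam i)) ∨ ∀ i, Q (lam i)) ↔
      P s ∧ M.satCoal A s (fun lam => ∀ i, P (lam (i + 1))) ∨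
        Q s ∧ M.satCoal A s (fun lam => ∀ i, Q (lam (i + 1))) ∨
          P s ∧ Q s ∧
            M.satCoal A s (fun lam => (∀ i, P (lam (i + 1))) ∨ ∀ i, Q (lam (i + 1))) := by
  have box_iff (R : State → Prop) (lam : ℕ → State) (h0 : lam 0 = s) :
      (∀ i, R (lam i)) ↔ R s ∧ ∀ i, R (lam (i + 1)) :=
    h0 ▸ Nat.and_forall_add_one.symm
  rw [satCoal_congr fun lam h0 => or_congr (box_iff P lam h0) (box_iff Q lam h0)]
  exact satCoal_and_or_and _ _ _ _

end CGM

theorem Form.psat_iff_SSat {Agent State : Type} {M : CGM Agent State} {V : ℕ → State → Prop}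
    {φ : Form Agent} (hφ : φ.isState = true) (lam : ℕ → State) :
    psat M V φ lam ↔ SSat M V φ (lam 0) := by
  induction φ with
  | neg φ ih => exact not_congr (ih hφ)
  | and φ ψ ihφ ihψ =>
    rw [isState, Bool.and_eq_true] at hφ
    exact and_congr (ihφ hφ.1) (ihψ hφ.2)
  | or φ ψ ihφ ihψ =>
    rw [isState, Bool.and_eq_true] at hφ
    exact or_congr (ihφ hφ.1) (ihψ hφ.2)
  | next | box | untl => simp [isState] at hφ
  | top | atom | coal | dcoal => rfl

/-- soundness of the γ-decomposition for disjunctions of box formulae: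
`⟨⟨A⟩⟩((□p) ∨ (□q)) ≡ (p ∧ ⟨⟨A⟩⟩◯⟨⟨A⟩⟩□p) ∨ (q ∧ ⟨⟨A⟩⟩◯⟨⟨A⟩⟩□q)
  ∨ (p ∧ q ∧ ⟨⟨A⟩⟩◯⟨⟨A⟩⟩((□p) ∨ (□q)))`. -/
theorem gamma_box_or_decomposition {Agent State : Type} (M : CGM Agent State)
    (V : ℕ → State → Prop) (A : Set Agent) (p q : Form Agent)
    (hp : p.isState = true) (hq : q.isState = true) (s : State) :
    Form.SSat M V (.coal A (.or (.box p) (.box q))) s ↔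
      Form.SSat M V
        (.or (.and p (.coal A (.next (.coal A (.box p)))))
          (.or (.and q (.coal A (.next (.coal A (.box q)))))
            (.and p (.and q
              (.coal A (.next (.coal A (.or (.box p) (.box q))))))))) s := by
  simp only [Form.SSat, Form.psat]
  simp only [Form.psat_iff_SSat hp, Form.psat_iff_SSat hq, zero_add, add_zero,
    CGM.satCoal_satCoal_iff_satCoal_tail]
  exact CGM.satCoal_box_or_box _ _
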